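/- For every positive integer n with n ≠ 2 there exists a prime number p in the interval [4n, 5n], i.e., with 4n ≤ p ≤ 5n. -/

import Mathlib

/-!
Chebyshev's method. Put `T x = log ⌊x⌋! = ∑_{d ≤ x} Λ d ⌊x / d⌋` and
`D x = T x - T (x/2) - T (x/3) - T (x/5) + T (x/30)`. Then `D x = ∑_{d ≤ x} Λ d w ⌊x / d⌋`, where
`w m = m - ⌊m/2⌋ - ⌊m/3⌋ - ⌊m/5⌋ + ⌊m/30⌋` takes only the values `0, 1` and equals `1` for
`1 ≤ m ≤ 5`; hence `ψ x - ψ (x/6) ≤ D x ≤ ψ x`. Stirling's formula gives `D x = A x + O(log x)` with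
`A = log 2 / 2 + log 3 / 3 + log 5 / 5 - log 30 / 30 ≈ 0.921`. So `ψ (5x) ≥ 5 A x - O(log x)`, while
`ψ (4x) ≤ D (4x) + D (2x/3) + ψ (x/9) ≤ (14/3) A x + (log 4 / 9) x + O(√x log x)`; since
`A / 3 > log 4 / 9` and `ψ - θ = O(√x log x)`, this forces `θ (4x) < θ (5x)` once `x ≥ 4 ^ 10`.
Smaller `n` are covered by a chain of primes in which each `q` is followed by a prime
`≤ 5 (⌊q / 4⌋ + 1)`.
-/

open Real Chebyshev Finset
open ArithmeticFunction hiding log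
open scoped Nat ArithmeticFunction.zeta

theorem log_factorial_eq_sum_log (N : ℕ) : log (N ! : ℝ) = ∑ n ∈ Ioc 0 N, log n := by
  induction N with
  | zero => simp
  | succ N ih =>
    rw [sum_Ioc_succ_top N.zero_le, ← ih, Nat.factorial_succ, Nat.cast_mul,
      log_mul (by positivity) (by positivity), add_comm, Nat.cast_add_one]

theorem log_factorial_eq_sum_vonMangoldt {N M : ℕ} (h : N ≤ M) :
    log (N ! : ℝ) = ∑ d ∈ Ioc 0 M, Λ d * (N / d : ℕ) := by
  have hlog : ∀ n : ℕ, log (n : ℝ) = (Λ * ζ) n := by simp [vonMangoldt_mul_zeta]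
  simp_rw [log_factorial_eq_sum_log, hlog, sum_Ioc_mul_zeta_eq_sum]
  refine sum_subset (Ioc_subset_Ioc_right h) fun d hdM hdN => ?_
  simp only [mem_Ioc, not_and, not_le] at hdM hdN
  simp [Nat.div_eq_of_lt (hdN hdM.1)]

theorem log_factorial_le {n : ℕ} (hn : n ≠ 0) :
    log (n ! : ℝ) ≤ n * log n - n + log n / 2 + 1 := by
  obtain ⟨m, rfl⟩ := Nat.exists_eq_succ_of_ne_zero hn
  have hanti : Stirling.stirlingSeq (m + 1) ≤ Stirling.stirlingSeq 1 :=
    Stirling.stirlingSeq'_antitone (Nat.zero_le m)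
  have hlog := log_le_log (Stirling.stirlingSeq'_pos m) hanti
  rw [Stirling.log_stirlingSeq_formula, Stirling.stirlingSeq_one,
    log_div (exp_pos 1).ne' (by positivity), log_sqrt zero_le_two,
    log_div (by positivity) (exp_pos 1).ne', log_mul two_ne_zero (by positivity), log_exp] at hlog
  push_cast at hlog ⊢
  linarith

noncomputable def logFactorialFloor (x : ℝ) : ℝ := log (⌊x⌋₊ ! : ℝ)

theorem logFactorialFloor_div_eq_sum (x : ℝ) (k : ℕ) :
    logFactorialFloor (x / k) = ∑ d ∈ Ioc 0 ⌊x⌋₊, Λ d * (⌊x⌋₊ / d / k : ℕ) := by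
  rw [logFactorialFloor, Nat.floor_div_natCast,
    log_factorial_eq_sum_vonMangoldt (Nat.div_le_self _ k)]
  simp_rw [Nat.div_div_eq_div_mul, mul_comm k]

theorem logFactorialFloor_le {x : ℝ} (hx : 1 ≤ x) :
    logFactorialFloor x ≤ x * log x - x + log x / 2 + 2 := by
  set n := ⌊x⌋₊
  have hn : 1 ≤ n := Nat.one_le_floor_iff x |>.2 hx
  have hn1 : (1 : ℝ) ≤ n := by exact_mod_cast hn
  have hnx : (n : ℝ) ≤ x := Nat.floor_le (by linarith)
  have hxn : x < n + 1 := Nat.lt_floor_add_one x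
  have hlog : log n ≤ log x := log_le_log (by linarith) hnx
  have hlogn : 0 ≤ log n := log_nonneg hn1
  have hmul : n * log n ≤ x * log x := mul_le_mul hnx hlog hlogn (by linarith)
  have := log_factorial_le (Nat.one_le_iff_ne_zero.1 hn)
  rw [logFactorialFloor]
  linarith

theorem le_logFactorialFloor {x : ℝ} (hx : 1 ≤ x) :
    x * log x - x - log x ≤ logFactorialFloor x := by
  set n := ⌊x⌋₊
  have hn : 1 ≤ n := Nat.one_le_floor_iff x |>.2 hx
  have hn0 : (0 : ℝ) < n := by exact_mod_cast hn
  have hxn : x < n + 1 := Nat.lt_floor_add_one x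
  have hlogx : 0 ≤ log x := log_nonneg hx
  have hlogn : 0 ≤ log n := log_nonneg (by exact_mod_cast hn)
  have htangent : n * (log x - log n) ≤ x - n := by
    have := log_le_sub_one_of_pos (div_pos (by linarith : 0 < x) hn0)
    rw [log_div (by linarith) hn0.ne', div_sub_one hn0.ne', le_div_iff₀ hn0] at this
    linarith
  have hstirling := Stirling.le_log_factorial_stirling (Nat.one_le_iff_ne_zero.1 hn)
  have h2pi : 0 ≤ log (2 * π) := log_nonneg (by linarith [pi_gt_three])
  have hfrac := mul_le_mul_of_nonneg_right hxn.le hlogx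
  rw [logFactorialFloor]
  linarith

theorem abs_logFactorialFloor_sub_le {x : ℝ} (hx : 1 ≤ x) :
    |logFactorialFloor x - (x * log x - x)| ≤ log x + 2 := by
  have := log_nonneg hx
  rw [abs_le]
  constructor <;> linarith [le_logFactorialFloor hx, logFactorialFloor_le hx]

def chebyshevWeight (m : ℕ) : ℤ := m - (m / 2 : ℕ) - (m / 3 : ℕ) - (m / 5 : ℕ) + (m / 30 : ℕ)

theorem chebyshevWeight_mem_Icc (m : ℕ) : chebyshevWeight m ∈ Set.Icc 0 1 := by
  simp only [chebyshevWeight, Set.mem_Icc]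
  omega

theorem chebyshevWeight_eq_one {m : ℕ} (h1 : 1 ≤ m) (h5 : m ≤ 5) : chebyshevWeight m = 1 := by
  simp only [chebyshevWeight]
  omega

noncomputable def chebyshevD (x : ℝ) : ℝ :=
  logFactorialFloor x - logFactorialFloor (x / 2) - logFactorialFloor (x / 3) -
    logFactorialFloor (x / 5) + logFactorialFloor (x / 30)

theorem chebyshevD_eq_sum (x : ℝ) :
    chebyshevD x = ∑ d ∈ Ioc 0 ⌊x⌋₊, Λ d * chebyshevWeight (⌊x⌋₊ / d) := by
  have h := logFactorialFloor_div_eq_sum x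
  have h1 := h 1
  simp only [Nat.cast_one, div_one, Nat.div_one] at h1
  rw [chebyshevD, h1, show x / 2 = x / (2 : ℕ) by norm_num, show x / 3 = x / (3 : ℕ) by norm_num,
    show x / 5 = x / (5 : ℕ) by norm_num, show x / 30 = x / (30 : ℕ) by norm_num, h, h, h, h]
  simp only [← sum_sub_distrib, ← sum_add_distrib, chebyshevWeight, Int.cast_add, Int.cast_sub,
    Int.cast_natCast]
  refine sum_congr rfl fun d _ => ?_
  ring

theorem chebyshevD_le_psi (x : ℝ) : chebyshevD x ≤ ψ x := by
  rw [chebyshevD_eq_sum, psi]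
  gcongr with d
  exact mul_le_of_le_one_right vonMangoldt_nonneg
    (by exact_mod_cast (chebyshevWeight_mem_Icc _).2)

theorem psi_sub_psi_div_six_le_chebyshevD (x : ℝ) : ψ x - ψ (x / 6) ≤ chebyshevD x := by
  set N := ⌊x⌋₊
  have h0 : 0 ≤ N / 6 := Nat.zero_le _
  have h6 : N / 6 ≤ N := Nat.div_le_self N 6
  have hsmall : 0 ≤ ∑ d ∈ Ioc 0 (N / 6), Λ d * chebyshevWeight (N / d) :=
    sum_nonneg fun d _ => mul_nonneg vonMangoldt_nonneg
      (by exact_mod_cast (chebyshevWeight_mem_Icc _).1)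
  have hlarge : ∑ d ∈ Ioc (N / 6) N, Λ d * chebyshevWeight (N / d) = ∑ d ∈ Ioc (N / 6) N, Λ d := by
    refine sum_congr rfl fun d hd => ?_
    obtain ⟨hd6, hdN⟩ := mem_Ioc.1 hd
    have hd : 0 < d := by omega
    rw [chebyshevWeight_eq_one ((Nat.one_le_div_iff hd).2 hdN)
      (Nat.lt_succ_iff.1 ((Nat.div_lt_iff_lt_mul hd).2 (by omega))), Int.cast_one, mul_one]
  rw [chebyshevD_eq_sum, psi, psi, Nat.floor_div_ofNat, ← sum_Ioc_consecutive _ h0 h6,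
    ← sum_Ioc_consecutive _ h0 h6, hlarge]
  linarith

noncomputable def chebyshevConst : ℝ := log 2 / 2 + log 3 / 3 + log 5 / 5 - log 30 / 30

theorem abs_chebyshevD_sub_le {x : ℝ} (hx : 30 ≤ x) :
    |chebyshevD x - chebyshevConst * x| ≤ 5 * log x + 10 := by
  have hx0 : 0 < x := by linarith
  have hT : ∀ k : ℝ, 1 ≤ k → k ≤ 30 →
      |logFactorialFloor (x / k) - (x / k * log (x / k) - x / k)| ≤ log x + 2 := fun k hk hk30 =>
    (abs_logFactorialFloor_sub_le ((one_le_div (by linarith)).2 (by linarith))).trans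
      (by gcongr; exact div_le_self hx0.le hk)
  have h1 := hT 1 le_rfl (by norm_num)
  have h2 := hT 2 (by norm_num) (by norm_num)
  have h3 := hT 3 (by norm_num) (by norm_num)
  have h5 := hT 5 (by norm_num) (by norm_num)
  have h30 := hT 30 (by norm_num) le_rfl
  have hA : x * log x - x - (x / 2 * log (x / 2) - x / 2) - (x / 3 * log (x / 3) - x / 3) -
      (x / 5 * log (x / 5) - x / 5) + (x / 30 * log (x / 30) - x / 30) = chebyshevConst * x := by
    simp only [log_div hx0.ne' two_ne_zero, log_div hx0.ne' three_ne_zero,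
      log_div hx0.ne' (by norm_num : (5 : ℝ) ≠ 0), log_div hx0.ne' (by norm_num : (30 : ℝ) ≠ 0),
      chebyshevConst]
    ring
  rw [div_one] at h1
  rw [abs_le] at *
  rw [chebyshevD]
  constructor <;> linarith

theorem lt_chebyshevConst_div_three_sub : 13 / 100 < chebyshevConst / 3 - log 4 / 9 := by
  have h30 : log 30 = log 2 + log 3 + log 5 := by
    rw [show (30 : ℝ) = 2 * 3 * 5 by norm_num, log_mul (by norm_num) (by norm_num),
      log_mul (by norm_num) (by norm_num)]
  have h4 : log 4 = 2 * log 2 := by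
    rw [show (4 : ℝ) = 2 ^ 2 by norm_num, log_pow, Nat.cast_ofNat]
  have h3 : 1 < log 3 := (lt_log_iff_exp_lt (by norm_num)).2 (exp_one_lt_d9.trans (by norm_num))
  have h5 : log 4 < log 5 := log_lt_log (by norm_num) (by norm_num)
  have h2 := log_two_gt_d9
  rw [chebyshevConst, h30]
  linarith

theorem log_five_mul_le {x : ℝ} (hx : 4 ^ 10 ≤ x) : log (5 * x) ≤ 14 + √x / 512 := by
  have hx0 : 0 < x := by linarith
  have ht : 2 ^ 10 ≤ √x := by
    rw [show (4 : ℝ) ^ 10 = (2 ^ 10) ^ 2 by norm_num] at hx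
    exact le_sqrt_of_sq_le hx
  have htangent : log √x ≤ 10 * log 2 + √x / 2 ^ 10 - 1 := by
    have := log_le_sub_one_of_pos (div_pos (by linarith : 0 < √x) (by norm_num : (0 : ℝ) < 2 ^ 10))
    rw [log_div (by positivity) (by norm_num), log_pow] at this
    push_cast at this
    linarith
  have h5 : log 5 < 3 * log 2 := by
    rw [← log_rpow two_pos]
    exact log_lt_log (by norm_num) (by norm_num)
  have h2 := log_two_lt_d9
  rw [log_mul (by norm_num) hx0.ne', show log x = 2 * log √x by rw [log_sqrt hx0.le]; ring]
  linarith

theorem psi_four_mul_le {x : ℝ} (hx : 45 ≤ x) :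
    ψ (4 * x) ≤ 14 / 3 * chebyshevConst * x + log 4 / 9 * x + 2 / 3 * √x * log (4 * x) +
      10 * log (4 * x) + 20 := by
  have hx0 : 0 < x := by linarith
  have hψ := psi_sub_psi_div_six_le_chebyshevD (4 * x)
  have hψ' := psi_sub_psi_div_six_le_chebyshevD (4 * x / 6)
  have hD := (abs_le.1 (abs_chebyshevD_sub_le (x := 4 * x) (by linarith))).2
  have hD' := (abs_le.1 (abs_chebyshevD_sub_le (x := 4 * x / 6) (by linarith))).2
  have hψ9 := psi_le (x := x / 9) ((one_le_div (by norm_num)).2 (by linarith))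
  rw [show 4 * x / 6 / 6 = x / 9 by ring] at hψ'
  have hsqrt : √(x / 9) = √x / 3 := by
    rw [sqrt_div' _ (by norm_num), show (9 : ℝ) = 3 ^ 2 by norm_num, sqrt_sq (by norm_num)]
  have hlog : log (4 * x / 6) ≤ log (4 * x) := log_le_log (by positivity) (by linarith)
  have hlog' : log (x / 9) ≤ log (4 * x) := log_le_log (by positivity) (by linarith)
  have hprod := mul_le_mul_of_nonneg_left hlog' (sqrt_nonneg x)
  rw [hsqrt] at hψ9
  linarith

theorem theta_four_mul_lt_theta_five_mul {x : ℝ} (hx : 4 ^ 10 ≤ x) : θ (4 * x) < θ (5 * x) := by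
  have hx0 : 0 < x := by linarith
  have ht : 2 ^ 10 ≤ √x := by
    rw [show (4 : ℝ) ^ 10 = (2 ^ 10) ^ 2 by norm_num] at hx
    exact le_sqrt_of_sq_le hx
  have hL0 : 0 ≤ log (5 * x) := log_nonneg (by linarith)
  have hsqrt5 : √(5 * x) ≤ 9 / 4 * √x := by
    rw [sqrt_mul (by norm_num)]
    gcongr
    exact sqrt_le_iff.2 ⟨by norm_num, by norm_num⟩
  have hθ5 : 5 * chebyshevConst * x - 5 * log (5 * x) - 10 - 9 / 2 * √x * log (5 * x) ≤
      θ (5 * x) := by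
    have := (abs_le.1 (abs_chebyshevD_sub_le (x := 5 * x) (by linarith))).1
    have := chebyshevD_le_psi (5 * x)
    have := psi_sub_theta_le (x := 5 * x) (by linarith)
    have := mul_le_mul_of_nonneg_right hsqrt5 hL0
    linarith
  have hθ4 : θ (4 * x) ≤ 14 / 3 * chebyshevConst * x + log 4 / 9 * x +
      2 / 3 * √x * log (5 * x) + 10 * log (5 * x) + 20 := by
    have hlog : log (4 * x) ≤ log (5 * x) := log_le_log (by positivity) (by linarith)
    have := psi_four_mul_le (x := x) (by linarith)
    have := theta_le_psi (4 * x)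
    have := mul_le_mul_of_nonneg_left hlog (sqrt_nonneg x)
    linarith
  have hL := log_five_mul_le hx
  have := mul_lt_mul_of_pos_right lt_chebyshevConst_div_three_sub hx0
  have := mul_le_mul_of_nonneg_left hL (sqrt_nonneg x)
  have := mul_le_mul_of_nonneg_left ht (sqrt_nonneg x)
  have := mul_self_sqrt hx0.le
  linarith

theorem exists_prime_of_theta_lt {a b : ℕ} (h : θ a < θ b) :
    ∃ p, p.Prime ∧ a < p ∧ p ≤ b := by
  by_contra! hno
  refine h.not_ge ?_
  simp only [theta, Nat.floor_natCast]
  refine sum_le_sum_of_subset_of_nonneg (fun p hp => ?_) fun p hp _ =>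
    log_nonneg (by exact_mod_cast (mem_filter.1 hp).2.one_lt.le)
  simp only [mem_filter, mem_Ioc] at hp ⊢
  exact ⟨⟨hp.1.1, not_lt.1 fun hap => (hno p hp.2 hap).not_ge hp.1.2⟩, hp.2⟩

-- A prime `q ≤ 5 * N` lies in `[4n, 5n]` for every `n` with `N ≤ n ≤ q / 4`.
def ladderStep (N q : ℕ) : ℕ := if q ≤ 5 * N then max N (q / 4 + 1) else N

theorem forall_lt_foldl_ladderStep {m : ℕ} :
    ∀ (l : List ℕ) (N : ℕ), (∀ q ∈ l, q.Prime) →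
      (∀ n, m ≤ n → n < N → ∃ p, p.Prime ∧ 4 * n ≤ p ∧ p ≤ 5 * n) →
      ∀ n, m ≤ n → n < l.foldl ladderStep N → ∃ p, p.Prime ∧ 4 * n ≤ p ∧ p ≤ 5 * n
  | [], _, _, hN => hN
  | q :: l, N, hl, hN => by
    refine forall_lt_foldl_ladderStep l _ (fun r hr => hl r (List.mem_cons_of_mem q hr)) ?_
    intro n hmn hn
    by_cases hnN : n < N
    · exact hN n hmn hnN
    · unfold ladderStep at hn
      split_ifs at hn with hq
      · exact ⟨q, hl q List.mem_cons_self, by omega, by omega⟩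
      · omega

-- Each entry is the largest prime not exceeding five times the reach of the entries before it.
def primeLadder : List ℕ :=
  [13, 19, 23, 29, 37, 47, 59, 73, 89, 113, 139, 173, 211, 263, 317, 397, 499, 619, 773, 967,
  1201, 1499, 1873, 2341, 2927, 3659, 4567, 5701, 7129, 8893, 11119, 13883, 17351, 21683, 27103,
  33871, 42337, 52919, 66137, 82657, 103319, 129127, 161407, 201757, 252193, 315223, 394019,
  492523, 615623, 769487, 961853, 1202317, 1502887, 1878593, 2348239, 2935279, 3669097, 4586347]

theorem exists_prime_Icc_four_five_of_lt {n : ℕ} (h3 : 3 ≤ n) (hn : n < 4 ^ 10) :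
    ∃ p, p.Prime ∧ 4 * n ≤ p ∧ p ≤ 5 * n :=
  forall_lt_foldl_ladderStep primeLadder 3 (by norm_num [primeLadder])
    (fun _ hm hlt => absurd hm (by omega)) n h3
    (hn.trans_le (by norm_num [primeLadder, ladderStep]))

theorem exists_prime_in_Icc_four_five (n : ℕ) (hn : 0 < n) (hn2 : n ≠ 2) :
    ∃ p : ℕ, p.Prime ∧ 4 * n ≤ p ∧ p ≤ 5 * n := by
  rcases lt_or_ge n 3 with h3 | h3
  · exact ⟨5, Nat.prime_five, by omega, by omega⟩
  rcases lt_or_ge n (4 ^ 10) with hsmall | hlarge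
  · exact exists_prime_Icc_four_five_of_lt h3 hsmall
  have hθ : θ (4 * n : ℕ) < θ (5 * n : ℕ) := by
    push_cast
    exact theta_four_mul_lt_theta_five_mul (by exact_mod_cast hlarge)
  obtain ⟨p, hp, h4, h5⟩ := exists_prime_of_theta_lt hθ
  exact ⟨p, hp, h4.le, h5⟩
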